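/- arXiv:2508.10621 — 2 statements merged into one kernel-verified Lean document; each statement's English description precedes it below -/
import Mathlib

section
/- There exist constants C > 0 and ρ₀ ∈ (0,1) such that for all a, e ∈ (0,ρ₀): |f_{0,0}(a,e) + 1 + (1/4)·a²| ≤ C · a² · (e² + a); that is, f_{0,0}(a,e) = -1 - (1/4)·a²·(1 + O(e²; a)) for small a, e. -/
noncomputable section

/-- ρ(e,u) = 1 - e cos u -/
def rho (e u : ℝ) : ℝ := 1 - e * Real.cos u

/-- mean anomaly ℓ(e,u) = u - e sin u -/
def meanAnom (e u : ℝ) : ℝ := u - e * Real.sin u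

/-- E(e,u) = e^{if}, the exponential of the true anomaly -/
def trueExp (e u : ℝ) : ℂ :=
  (((Real.cos u - e : ℝ) : ℂ) + ((Real.sqrt (1 - e ^ 2) * Real.sin u : ℝ) : ℂ) * Complex.I) /
    ((1 - e * Real.cos u : ℝ) : ℂ)

/-- Hansen coefficient X^{n,m}_k(e) -/
def hansen (n m k : ℤ) (e : ℝ) : ℝ :=
  (1 / (2 * Real.pi)) * ∫ u in (0:ℝ)..(2 * Real.pi),
    rho e u ^ (n + 1) *
      (trueExp e u ^ m * Complex.exp (-(Complex.I * (k : ℂ) * ((meanAnom e u : ℝ) : ℂ)))).re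

/-- cos ψ where ψ = f + g -/
def cospsi (e u g : ℝ) : ℝ :=
  ((Real.cos u - e) / rho e u) * Real.cos g -
    (Real.sqrt (1 - e ^ 2) * Real.sin u / rho e u) * Real.sin g

/-- the PCR3BP perturbing function F(a,e,u,g) -/
def perturb (a e u g : ℝ) : ℝ :=
  a * rho e u * cospsi e u g -
    (Real.sqrt (1 + (a * rho e u) ^ 2 - 2 * (a * rho e u) * cospsi e u g))⁻¹

/-- Fourier coefficients f_{m,k}(a,e) of the perturbing function -/
def pcrFourier (m k : ℤ) (a e : ℝ) : ℝ :=
  if m = 0 ∧ k = 0 then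
    (1 / (4 * Real.pi ^ 2)) * ∫ g in (0:ℝ)..(2 * Real.pi), ∫ u in (0:ℝ)..(2 * Real.pi),
      perturb a e u g * rho e u
  else
    (1 / (2 * Real.pi ^ 2)) * ∫ g in (0:ℝ)..(2 * Real.pi), ∫ u in (0:ℝ)..(2 * Real.pi),
      perturb a e u g * Real.cos ((m : ℝ) * g + (k : ℝ) * meanAnom e u) * rho e u

/-- C_{n,m} -/
def Cnm (n m : ℕ) : ℝ :=
  ((Nat.factorial (n + m) : ℝ) * (Nat.factorial (n - m) : ℝ)) /
    (2 ^ (2 * n) * (Nat.factorial ((n + m) / 2) : ℝ) ^ 2 * (Nat.factorial ((n - m) / 2) : ℝ) ^ 2)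

/-!
With `r = aρ`, `F = r cos ψ - (1 + r² - 2r cos ψ)^(-1/2) = -1 - r² P₂(cos ψ) + O(r³)` uniformly
in `u, g`: the indirect term `r cos ψ` cancels the `P₁` term of the Legendre expansion. Against
`ρ du = dℓ` the quadratic term contributes `-a² ρ³ P₂(cos ψ)`; the mean of `P₂(cos ψ)` over `g` is
`1/4` and the mean of `ρ³` over `u` is `1 + 3e²/2`, so `f₀₀ = -1 - a²/4 - 3a²e²/8 + O(a³)`.
-/

open Real MeasureTheory Function

lemma abs_inv_sqrt_one_sub_sub_le {s : ℝ} (hs : |s| ≤ 1 / 2) :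
    |(√(1 - s))⁻¹ - (1 + s / 2 + 3 * s ^ 2 / 8)| ≤ 3 * |s| ^ 3 := by
  obtain ⟨hs₁, hs₂⟩ := abs_le.mp hs
  set h := (√(1 - s))⁻¹
  set p := 1 + s / 2 + 3 * s ^ 2 / 8 with hp
  set q := 5 / 8 + 15 / 64 * s + 9 / 64 * s ^ 2 with hq
  have hpos : 0 < h := inv_pos.mpr (Real.sqrt_pos.mpr (by linarith))
  have hh : h ^ 2 * (1 - s) = 1 := by
    rw [inv_pow, Real.sq_sqrt (by linarith)]; exact inv_mul_cancel₀ (by linarith)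
  -- `p` is the Taylor polynomial of `(1 - s) ^ (-1/2)`, so `1 - p² (1 - s) = s³ q` is of order `s³`
  have key : (h - p) * ((h + p) * (1 - s)) = s ^ 3 * q := by linear_combination hh
  have hden : 3 / 8 ≤ (h + p) * (1 - s) := by
    nlinarith [sq_nonneg s, mul_pos hpos (by linarith : (0:ℝ) < 1 - s)]
  have hq_le : |q| ≤ 1 := abs_le.mpr ⟨by nlinarith [sq_nonneg s], by nlinarith [sq_nonneg s]⟩
  have hkey : |h - p| * ((h + p) * (1 - s)) = |s| ^ 3 * |q| := by
    rw [← abs_of_nonneg (by linarith : 0 ≤ (h + p) * (1 - s)), ← abs_mul, key, abs_mul, abs_pow]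
  nlinarith [abs_nonneg (h - p), pow_nonneg (abs_nonneg s) 3,
    mul_le_mul_of_nonneg_left hden (abs_nonneg (h - p)),
    mul_le_mul_of_nonneg_left hq_le (pow_nonneg (abs_nonneg s) 3)]

lemma abs_inv_sqrt_sub_legendre_le {r t : ℝ} (hr : 0 ≤ r) (hr' : r ≤ 9 / 64) (ht : |t| ≤ r) :
    |(√(1 + r ^ 2 - 2 * t))⁻¹ - (1 + t + (3 * t ^ 2 - r ^ 2) / 2)| ≤ 50 * r ^ 3 := by
  obtain ⟨ht₁, ht₂⟩ := abs_le.mp ht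
  set s := 2 * t - r ^ 2
  have hs : |s| ≤ 137 / 64 * r := abs_le.mpr ⟨by nlinarith, by nlinarith⟩
  have htaylor := abs_inv_sqrt_one_sub_sub_le (s := s) (by linarith)
  have hs3 : |s| ^ 3 ≤ (137 / 64 * r) ^ 3 := pow_le_pow_left₀ (abs_nonneg s) hs 3
  have hpoly : |(1 + s / 2 + 3 * s ^ 2 / 8) - (1 + t + (3 * t ^ 2 - r ^ 2) / 2)| ≤ 2 * r ^ 3 := by
    rw [abs_le]; constructor <;> nlinarith [mul_le_mul_of_nonneg_right ht₂ (sq_nonneg r),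
      mul_le_mul_of_nonneg_right ht₁ (sq_nonneg r), pow_nonneg hr 3, pow_nonneg hr 4]
  rw [show 1 - s = 1 + r ^ 2 - 2 * t by ring] at htaylor
  calc _ ≤ 3 * |s| ^ 3 + 2 * r ^ 3 := (abs_sub_le _ _ _).trans (add_le_add htaylor hpoly)
    _ ≤ 50 * r ^ 3 := by nlinarith [pow_nonneg hr 3]

theorem intervalIntegral_integral_swap_of_continuous {f : ℝ → ℝ → ℝ}
    (hf : Continuous (uncurry f)) {a b c d : ℝ} (hab : a ≤ b) (hcd : c ≤ d) :
    ∫ x in a..b, ∫ y in c..d, f x y = ∫ y in c..d, ∫ x in a..b, f x y := by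
  simp only [intervalIntegral.integral_of_le hab, intervalIntegral.integral_of_le hcd]
  apply integral_integral_swap
  rw [Measure.prod_restrict, ← Measure.volume_eq_prod]
  exact (hf.continuousOn.integrableOn_compact (isCompact_Icc.prod isCompact_Icc)).mono_set
    (Set.prod_mono Set.Ioc_subset_Icc_self Set.Ioc_subset_Icc_self)

theorem abs_iteratedIntegral_sub_le {f g : ℝ → ℝ → ℝ} (hf : Continuous (uncurry f))
    (hg : Continuous (uncurry g)) {C : ℝ} (h : ∀ x y, |f x y - g x y| ≤ C) (a b c d : ℝ) :
    |(∫ x in a..b, ∫ y in c..d, f x y) - ∫ x in a..b, ∫ y in c..d, g x y| ≤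
      C * |d - c| * |b - a| := by
  have hcont : ∀ {f : ℝ → ℝ → ℝ}, Continuous (uncurry f) →
      Continuous fun x => ∫ y in c..d, f x y := fun hf =>
    intervalIntegral.continuous_parametric_intervalIntegral_of_continuous' (μ := volume) hf c d
  rw [← intervalIntegral.integral_sub ((hcont hf).intervalIntegrable a b)
    ((hcont hg).intervalIntegrable a b)]
  refine intervalIntegral.norm_integral_le_of_norm_le_const (E := ℝ) fun x _ => ?_
  rw [← intervalIntegral.integral_sub ((hf.uncurry_left x).intervalIntegrable c d)
    ((hg.uncurry_left x).intervalIntegrable c d)]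
  exact intervalIntegral.norm_integral_le_of_norm_le_const (E := ℝ) fun y _ => h x y

theorem integral_sq_mul_cos_add_mul_sin (A B : ℝ) :
    ∫ x in (0:ℝ)..2 * π, (A * cos x + B * sin x) ^ 2 = π * (A ^ 2 + B ^ 2) := by
  have hexpand : (fun x => (A * cos x + B * sin x) ^ 2) =
      fun x => A ^ 2 * cos x ^ 2 + 2 * A * B * (sin x * cos x) + B ^ 2 * sin x ^ 2 := by
    funext x; ring
  rw [hexpand, intervalIntegral.integral_add, intervalIntegral.integral_add,
    intervalIntegral.integral_const_mul, intervalIntegral.integral_const_mul,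
    intervalIntegral.integral_const_mul, integral_cos_sq, integral_sin_mul_cos₁, integral_sin_sq]
  · simp only [cos_two_pi, sin_two_pi, cos_zero, sin_zero]; ring
  all_goals exact Continuous.intervalIntegrable (by fun_prop) _ _

theorem integral_one_sub_mul_cos_pow_three (e : ℝ) :
    ∫ x in (0:ℝ)..2 * π, (1 - e * cos x) ^ 3 = 2 * π + 3 * π * e ^ 2 := by
  have hexpand : (fun x => (1 - e * cos x) ^ 3) =
      fun x => 1 - 3 * e * cos x + 3 * e ^ 2 * cos x ^ 2 - e ^ 3 * cos x ^ 3 := by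
    funext x; ring
  rw [hexpand, intervalIntegral.integral_sub, intervalIntegral.integral_add,
    intervalIntegral.integral_sub, intervalIntegral.integral_const_mul,
    intervalIntegral.integral_const_mul, intervalIntegral.integral_const_mul, integral_one,
    integral_cos, integral_cos_sq, integral_cos_pow_three]
  · simp only [cos_two_pi, sin_two_pi, cos_zero, sin_zero]; ring
  all_goals exact Continuous.intervalIntegrable (by fun_prop) _ _

/-- `ρ cos ψ` -/
def rhoCospsi (e u g : ℝ) : ℝ := (cos u - e) * cos g - √(1 - e ^ 2) * sin u * sin g

/-- `F ρ` up to `O(a³)` -/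
def perturbRhoApprox (a e u g : ℝ) : ℝ :=
  -rho e u - a ^ 2 / 2 * rho e u * (3 * rhoCospsi e u g ^ 2 - rho e u ^ 2)

section

variable {a e : ℝ}

lemma rho_mem_Icc (he : |e| ≤ 1 / 8) (u : ℝ) : rho e u ∈ Set.Icc (7 / 8) (9 / 8) := by
  have := abs_le.mp he
  have := abs_le.mp (abs_cos_le_one u)
  constructor <;> simp only [rho] <;> nlinarith

lemma sq_add_sq_eq_rho_sq (he : e ^ 2 ≤ 1) (u : ℝ) :
    (cos u - e) ^ 2 + (√(1 - e ^ 2) * sin u) ^ 2 = rho e u ^ 2 := by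
  rw [mul_pow, Real.sq_sqrt (by linarith), rho]
  linear_combination (1 - e ^ 2) * sin_sq_add_cos_sq u

lemma abs_rhoCospsi_le (he : |e| ≤ 1) (u g : ℝ) : |rhoCospsi e u g| ≤ rho e u := by
  have he' : e ^ 2 ≤ 1 := by nlinarith [abs_le.mp he, sq_abs e]
  refine abs_le_of_sq_le_sq ?_ ?_
  · have key : rhoCospsi e u g ^ 2 + ((cos u - e) * sin g + √(1 - e ^ 2) * sin u * cos g) ^ 2 =
        rho e u ^ 2 := by
      rw [← sq_add_sq_eq_rho_sq he' u, rhoCospsi]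
      linear_combination ((cos u - e) ^ 2 + (√(1 - e ^ 2) * sin u) ^ 2) * sin_sq_add_cos_sq g
    nlinarith [sq_nonneg ((cos u - e) * sin g + √(1 - e ^ 2) * sin u * cos g)]
  · have := abs_le.mp he
    have := abs_le.mp (abs_cos_le_one u)
    simp only [rho]; nlinarith

lemma perturb_eq {u g : ℝ} (h : rho e u ≠ 0) :
    perturb a e u g = a * rhoCospsi e u g -
      (√(1 + (a * rho e u) ^ 2 - 2 * (a * rhoCospsi e u g)))⁻¹ := by
  have hcos : cospsi e u g = rhoCospsi e u g / rho e u := by rw [cospsi, rhoCospsi]; ring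
  have hmul : a * rho e u * (rhoCospsi e u g / rho e u) = a * rhoCospsi e u g := by field_simp
  rw [perturb, hcos, hmul, mul_assoc 2, hmul]

lemma abs_perturb_mul_rho_sub_approx_le (ha : 0 ≤ a) (ha' : a ≤ 1 / 8) (he : |e| ≤ 1 / 8)
    (u g : ℝ) : |perturb a e u g * rho e u - perturbRhoApprox a e u g| ≤ 100 * a ^ 3 := by
  obtain ⟨hρ₁, hρ₂⟩ := rho_mem_Icc he u
  have ht : |a * rhoCospsi e u g| ≤ a * rho e u := by
    rw [abs_mul, abs_of_nonneg ha]
    exact mul_le_mul_of_nonneg_left (abs_rhoCospsi_le (by linarith) u g) ha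
  have hexp := abs_inv_sqrt_sub_legendre_le (by positivity) (by nlinarith) ht
  have hdiff : perturb a e u g * rho e u - perturbRhoApprox a e u g =
      -(rho e u * ((√(1 + (a * rho e u) ^ 2 - 2 * (a * rhoCospsi e u g)))⁻¹ -
        (1 + a * rhoCospsi e u g + (3 * (a * rhoCospsi e u g) ^ 2 - (a * rho e u) ^ 2) / 2))) := by
    rw [perturb_eq (by linarith), perturbRhoApprox]; ring
  have hρ₄ : rho e u ^ 4 ≤ 2 := by
    calc rho e u ^ 4 ≤ (9 / 8) ^ 4 := pow_le_pow_left₀ (by linarith) hρ₂ 4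
      _ ≤ 2 := by norm_num
  rw [hdiff, abs_neg, abs_mul, abs_of_nonneg (by linarith)]
  calc _ ≤ rho e u * (50 * (a * rho e u) ^ 3) := mul_le_mul_of_nonneg_left hexp (by linarith)
    _ = 50 * a ^ 3 * rho e u ^ 4 := by ring
    _ ≤ 100 * a ^ 3 := by nlinarith [pow_nonneg ha 3]

lemma continuous_perturb_mul_rho (ha : 0 ≤ a) (ha' : a ≤ 1 / 8) (he : |e| ≤ 1 / 8) :
    Continuous (uncurry fun g u => perturb a e u g * rho e u) := by
  have hρ := rho_mem_Icc he
  have hpos : ∀ u g, 0 < 1 + (a * rho e u) ^ 2 - 2 * (a * rhoCospsi e u g) := by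
    intro u g
    have := mul_le_mul_of_nonneg_left (abs_le.mp (abs_rhoCospsi_le (by linarith) u g)).2 ha
    nlinarith [(hρ u).2]
  have hform : (uncurry fun g u => perturb a e u g * rho e u) = fun p : ℝ × ℝ =>
      (a * rhoCospsi e p.2 p.1 -
        (√(1 + (a * rho e p.2) ^ 2 - 2 * (a * rhoCospsi e p.2 p.1)))⁻¹) * rho e p.2 := by
    funext p; rw [uncurry_apply_pair, perturb_eq (by linarith [(hρ p.2).1])]
  rw [hform]
  simp only [rhoCospsi, rho] at hpos ⊢
  exact Continuous.mul (Continuous.sub (by fun_prop) (Continuous.inv₀ (by fun_prop)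
    fun p => (Real.sqrt_pos.mpr (hpos p.2 p.1)).ne')) (by fun_prop)

lemma continuous_perturbRhoApprox : Continuous (uncurry fun g u => perturbRhoApprox a e u g) := by
  simp only [perturbRhoApprox, rhoCospsi, rho]
  fun_prop

lemma integral_perturbRhoApprox_dg (he : e ^ 2 ≤ 1) (u : ℝ) :
    ∫ g in (0:ℝ)..2 * π, perturbRhoApprox a e u g =
      -2 * π * rho e u - π * a ^ 2 / 2 * rho e u ^ 3 := by
  have hform : (fun g => perturbRhoApprox a e u g) = fun g =>
      (-rho e u + a ^ 2 / 2 * rho e u ^ 3) + (-3 * a ^ 2 / 2 * rho e u) *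
        ((cos u - e) * cos g + (-(√(1 - e ^ 2) * sin u)) * sin g) ^ 2 := by
    funext g; rw [perturbRhoApprox, rhoCospsi]; ring
  rw [hform, intervalIntegral.integral_add, intervalIntegral.integral_const,
    intervalIntegral.integral_const_mul, integral_sq_mul_cos_add_mul_sin, neg_sq,
    sq_add_sq_eq_rho_sq he]
  · simp only [sub_zero, smul_eq_mul]; ring
  all_goals exact Continuous.intervalIntegrable (by fun_prop) _ _

lemma integral_integral_perturbRhoApprox (he : e ^ 2 ≤ 1) :
    ∫ g in (0:ℝ)..2 * π, ∫ u in (0:ℝ)..2 * π, perturbRhoApprox a e u g =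
      -(4 * π ^ 2 + π ^ 2 * a ^ 2 * (1 + 3 / 2 * e ^ 2)) := by
  have hρ : ∫ u in (0:ℝ)..2 * π, rho e u = 2 * π := by simp [rho]
  have hρ₃ : ∫ u in (0:ℝ)..2 * π, rho e u ^ 3 = 2 * π + 3 * π * e ^ 2 :=
    integral_one_sub_mul_cos_pow_three e
  rw [intervalIntegral_integral_swap_of_continuous continuous_perturbRhoApprox two_pi_pos.le
    two_pi_pos.le, intervalIntegral.integral_congr fun u _ => integral_perturbRhoApprox_dg he u,
    intervalIntegral.integral_sub, intervalIntegral.integral_const_mul,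
    intervalIntegral.integral_const_mul, hρ, hρ₃]
  · ring
  all_goals exact Continuous.intervalIntegrable (by simp only [rho]; fun_prop) _ _

lemma abs_pcrFourier_zero_zero_add_le (ha : 0 ≤ a) (ha' : a ≤ 1 / 8) (he : |e| ≤ 1 / 8) :
    |pcrFourier 0 0 a e + (1 + a ^ 2 / 4 * (1 + 3 / 2 * e ^ 2))| ≤ 100 * a ^ 3 := by
  have hbound := abs_iteratedIntegral_sub_le (continuous_perturb_mul_rho ha ha' he)
    continuous_perturbRhoApprox (fun g u => abs_perturb_mul_rho_sub_approx_le ha ha' he u g)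
    0 (2 * π) 0 (2 * π)
  rw [integral_integral_perturbRhoApprox (by nlinarith [sq_abs e, abs_nonneg e]), sub_zero,
    abs_of_pos two_pi_pos] at hbound
  have hcoeff : pcrFourier 0 0 a e + (1 + a ^ 2 / 4 * (1 + 3 / 2 * e ^ 2)) =
      ((∫ g in (0:ℝ)..2 * π, ∫ u in (0:ℝ)..2 * π, perturb a e u g * rho e u) -
        -(4 * π ^ 2 + π ^ 2 * a ^ 2 * (1 + 3 / 2 * e ^ 2))) / (4 * π ^ 2) := by
    rw [pcrFourier, if_pos ⟨rfl, rfl⟩]; field_simp; ring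
  rw [hcoeff, abs_div, abs_of_pos (by positivity : (0:ℝ) < 4 * π ^ 2),
    div_le_iff₀ (by positivity)]
  linarith

end

/-- asymptotics of the mean Fourier coefficient
f_{0,0}(a,e) = -1 - (1/4) a² (1 + O(e²;a)) for small (a,e). -/
theorem fourier_coeff_zero_asymptotics :
    ∃ C > (0 : ℝ), ∃ ρ₀ ∈ Set.Ioo (0:ℝ) 1, ∀ a e : ℝ,
      a ∈ Set.Ioo (0:ℝ) ρ₀ → e ∈ Set.Ioo (0:ℝ) ρ₀ →
      |pcrFourier 0 0 a e + 1 + (1 / 4) * a ^ 2| ≤ C * a ^ 2 * (e ^ 2 + a) := by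
  refine ⟨100, by norm_num, 1 / 8, by norm_num, ?_⟩
  rintro a e ⟨ha₀, ha₁⟩ ⟨he₀, he₁⟩
  have hcoeff := abs_pcrFourier_zero_zero_add_le ha₀.le ha₁.le (abs_le.mpr ⟨by linarith, he₁.le⟩)
  calc |pcrFourier 0 0 a e + 1 + (1 / 4) * a ^ 2|
      = |(pcrFourier 0 0 a e + (1 + a ^ 2 / 4 * (1 + 3 / 2 * e ^ 2))) -
          3 / 8 * a ^ 2 * e ^ 2| := by
        congr 1; ring
    _ ≤ 100 * a ^ 3 + 3 / 8 * a ^ 2 * e ^ 2 :=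
        (abs_sub _ _).trans (add_le_add hcoeff (abs_of_nonneg (by positivity)).le)
    _ ≤ 100 * a ^ 2 * (e ^ 2 + a) := by nlinarith [sq_nonneg (a * e)]

end
end

section
/- Fix e ∈ [0,1) and integers n, m. Then for every u₀ ∈ ℝ, the Fourier series of the function (r/a)^n · e^{imf} in the mean anomaly converges absolutely and one has ρ(e,u₀)^n · E(e,u₀)^m = ∑_{k ∈ ℤ} X^{n,m}_k(e) · e^{i k ℓ(e,u₀)} (Giacaglia's relation), where the series over k ∈ ℤ converges absolutely. -/
/-! Kepler's equation `ℓ = u - e sin u` has a smooth inverse `u(ℓ)` for `|e| < 1`, so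
`ℓ ↦ ρ(u(ℓ))^n E(u(ℓ))^m` is a smooth `2π`-periodic function of the mean anomaly. Integrating by
parts twice bounds its Fourier coefficients by `C / k²`, so its Fourier series converges absolutely
and pointwise to it. Substituting `ℓ = ℓ(u)`, `dℓ = ρ du` in the coefficient integral gives the
Hansen integral in the eccentric anomaly; the reflection `u ↦ 2π - u` conjugates the integrand, so
the coefficient is real and equals the real-part integral `X^{n,m}_k(e)`. -/

open Real Complex Function intervalIntegral MeasureTheory ComplexConjugate Filter
open scoped ContDiff

theorem ContDiff.zpow {𝕜 E 𝕜' : Type*} [NontriviallyNormedField 𝕜] [NormedAddCommGroup E]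
    [NormedSpace 𝕜 E] [NormedField 𝕜'] [NormedAlgebra 𝕜 𝕜'] [CompleteSpace 𝕜'] {n : WithTop ℕ∞}
    {f : E → 𝕜'} (hf : ContDiff 𝕜 n f) (h : ∀ x, f x ≠ 0) (m : ℤ) :
    ContDiff 𝕜 n fun x => f x ^ m := by
  cases m with
  | ofNat k => simpa only [Int.ofNat_eq_natCast, zpow_natCast] using hf.pow k
  | negSucc k =>
    simpa only [zpow_negSucc] using (hf.pow (k + 1)).fun_inv fun x => pow_ne_zero _ (h x)

@[fun_prop]
theorem ContDiff.ofReal {E : Type*} [NormedAddCommGroup E] [NormedSpace ℝ E] {n : WithTop ℕ∞}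
    {f : E → ℝ} (hf : ContDiff ℝ n f) : ContDiff ℝ n fun x => (f x : ℂ) :=
  ofRealCLM.contDiff.comp hf

theorem Function.Periodic.deriv {𝕜 F : Type*} [NontriviallyNormedField 𝕜] [NormedAddCommGroup F]
    [NormedSpace 𝕜 F] {f : 𝕜 → F} {c : 𝕜} (hf : Periodic f c) : Periodic (deriv f) c := fun x => by
  rw [← deriv_comp_add_const, hf.funext]

theorem intervalIntegral.integral_eq_ofReal_integral_re_of_conj {a b : ℝ} {g : ℝ → ℂ}
    (hg : IntervalIntegrable g volume a b) (hsymm : ∀ x, g (a + b - x) = conj (g x)) :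
    ∫ x in a..b, g x = ((∫ x in a..b, (g x).re : ℝ) : ℂ) := by
  have hreflect : ∫ x in a..b, g (a + b - x) = ∫ x in a..b, g x := by
    rw [integral_comp_sub_left, add_sub_cancel_right, add_sub_cancel_left]
  have hreal : conj (∫ x in a..b, g x) = ∫ x in a..b, g x := by
    rw [← intervalIntegral_conj, ← hreflect]
    simp only [hsymm]
  rw [← Complex.conj_eq_iff_re.mp hreal]
  exact congrArg _ (intervalIntegral_re hg).symm

theorem two_pi_I_mul_mul_div_two_pi (n x : ℂ) : 2 * π * I * n * x / (2 * π) = I * n * x := by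
  have : (π : ℂ) ≠ 0 := ofReal_ne_zero.mpr pi_ne_zero
  field_simp

theorem exp_neg_I_mul_int_mul_two_pi_sub (k : ℤ) (x : ℝ) :
    exp (-(I * k * ((2 * π - x : ℝ) : ℂ))) = conj (exp (-(I * k * x))) := by
  rw [← exp_conj, map_neg, map_mul, map_mul, conj_I, map_intCast, conj_ofReal,
    show -(I * k * ((2 * π - x : ℝ) : ℂ)) = -(-I * k * x) - k * (2 * π * I) by push_cast; ring,
    Complex.exp_sub, exp_int_mul_two_pi_mul_I, div_one]

section FourierCoeffOn

variable {T : ℝ} (hT : 0 < T)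

theorem fourierCoeffOn_eq_integral_exp (f : ℝ → ℂ) (n : ℤ) :
    fourierCoeffOn hT f n = T⁻¹ * ∫ x in 0..T, exp (-(2 * π * I * n * x / T)) * f x := by
  rw [fourierCoeffOn_eq_integral, sub_zero, one_div, Complex.real_smul, ofReal_inv]
  congr 2 with x
  rw [fourier_coe_apply, smul_eq_mul]
  push_cast
  ring_nf

theorem norm_fourierCoeffOn_le {E : Type*} [NormedAddCommGroup E] [NormedSpace ℂ E] {a b : ℝ}
    (hab : a < b) (f : ℝ → E) (n : ℤ) :
    ‖fourierCoeffOn hab f n‖ ≤ (b - a)⁻¹ * ∫ x in a..b, ‖f x‖ := by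
  rw [fourierCoeffOn_eq_integral, norm_smul, one_div, norm_inv,
    Real.norm_of_nonneg (sub_pos.2 hab).le]
  gcongr
  refine (intervalIntegral.norm_integral_le_integral_norm hab.le).trans_eq
    (integral_congr fun x _ => ?_)
  simp only [norm_smul, fourier_apply, Circle.norm_coe, one_mul]

theorem fourierCoeffOn_eq_mul_fourierCoeffOn_deriv {f : ℝ → ℂ}
    (hper : Periodic f T) (hd : Differentiable ℝ f) (hc : Continuous (deriv f)) {n : ℤ}
    (hn : n ≠ 0) :
    fourierCoeffOn hT f n = T / (2 * π * I * n) * fourierCoeffOn hT (deriv f) n := by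
  rw [fourierCoeffOn_of_hasDerivAt hT hn (fun x _ => (hd x).hasDerivAt)
    (hc.intervalIntegrable _ _), show f T = f 0 by simpa using hper 0, sub_self, mul_zero,
    zero_sub, ofReal_zero, sub_zero]
  have : (n : ℂ) ≠ 0 := Int.cast_ne_zero.mpr hn
  field_simp

theorem norm_fourierCoeffOn_le_of_contDiff_two {f : ℝ → ℂ}
    (hper : Periodic f T) (hf : ContDiff ℝ 2 f) {n : ℤ} (hn : n ≠ 0) :
    ‖fourierCoeffOn hT f n‖ ≤
      (T / (2 * π)) ^ 2 * (T⁻¹ * ∫ x in 0..T, ‖deriv (deriv f) x‖) / (n : ℝ) ^ 2 := by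
  obtain ⟨hd, -, hf'⟩ := (contDiff_succ_iff_deriv (n := 1)).mp hf
  obtain ⟨hd', -, hf''⟩ := (contDiff_succ_iff_deriv (n := 0)).mp hf'
  have htwice : fourierCoeffOn hT f n =
      (T / (2 * π * I * n)) ^ 2 * fourierCoeffOn hT (deriv (deriv f)) n := by
    rw [fourierCoeffOn_eq_mul_fourierCoeffOn_deriv hT hper hd hf'.continuous hn,
      fourierCoeffOn_eq_mul_fourierCoeffOn_deriv hT hper.deriv hd' hf''.continuous hn]
    ring
  have hfactor : ‖T / (2 * π * I * n)‖ ^ 2 = (T / (2 * π)) ^ 2 / (n : ℝ) ^ 2 := by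
    simp only [norm_div, norm_mul, Complex.norm_real, norm_I, Complex.norm_intCast,
      Real.norm_of_nonneg hT.le, Complex.norm_two, Real.norm_of_nonneg pi_pos.le, mul_one, div_pow,
      mul_pow, sq_abs, div_div]
  rw [htwice, norm_mul, norm_pow, hfactor, div_mul_eq_mul_div]
  gcongr
  simpa only [sub_zero] using norm_fourierCoeffOn_le hT (deriv (deriv f)) n

theorem summable_norm_fourierCoeffOn_of_contDiff_two {f : ℝ → ℂ}
    (hper : Periodic f T) (hf : ContDiff ℝ 2 f) :
    Summable fun n => ‖fourierCoeffOn hT f n‖ := by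
  set C := (T / (2 * π)) ^ 2 * (T⁻¹ * ∫ x in 0..T, ‖deriv (deriv f) x‖)
  refine Summable.of_norm_bounded_eventually (g := fun n : ℤ => C / (n : ℝ) ^ 2) ?_ ?_
  · simpa only [mul_one_div] using (summable_one_div_int_pow.mpr one_lt_two).mul_left C
  · filter_upwards [(Set.finite_singleton (0 : ℤ)).compl_mem_cofinite] with n hn
    rw [norm_norm]
    exact norm_fourierCoeffOn_le_of_contDiff_two hT hper hf hn

theorem hasSum_fourierCoeffOn_mul_exp {f : ℝ → ℂ} (hper : Periodic f T)
    (hf : Continuous f) (hsum : Summable (fourierCoeffOn hT f)) (x : ℝ) :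
    HasSum (fun n : ℤ => fourierCoeffOn hT f n * exp (2 * π * I * n * x / T)) (f x) := by
  have : Fact (0 < T) := ⟨hT⟩
  let F : C(AddCircle T, ℂ) := ⟨hper.lift, hf.quotient_liftOn' _⟩
  have hFx : F x = f x := hper.lift_coe x
  have hcoeff : fourierCoeff F = fourierCoeffOn hT f := by
    ext n
    rw [fourierCoeff_eq_intervalIntegral F n 0, fourierCoeffOn_eq_integral, zero_add, sub_zero]
    rfl
  have := has_pointwise_sum_fourier_series_of_summable (hcoeff ▸ hsum) (x : AddCircle T)
  rw [hFx] at this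
  simpa only [hcoeff, fourier_coe_apply, smul_eq_mul] using this

end FourierCoeffOn

section Kepler

variable {e : ℝ}

theorem rho_pos (he : |e| < 1) (u : ℝ) : 0 < rho e u := by
  have : e * Real.cos u < 1 := calc
    e * Real.cos u ≤ |e| * |Real.cos u| := abs_mul e (Real.cos u) ▸ le_abs_self _
    _ ≤ |e| * 1 := by gcongr; exact abs_cos_le_one u
    _ < 1 := by linarith
  rw [rho]; linarith

theorem contDiff_rho {n : WithTop ℕ∞} : ContDiff ℝ n (rho e) := by
  unfold rho; fun_prop

theorem contDiff_meanAnom {n : WithTop ℕ∞} : ContDiff ℝ n (meanAnom e) := by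
  unfold meanAnom; fun_prop

theorem hasDerivAt_meanAnom (e u : ℝ) : HasDerivAt (meanAnom e) (rho e u) u := by
  rw [rho]; exact (hasDerivAt_id' u).sub ((Real.hasDerivAt_sin u).const_mul e)

theorem meanAnom_strictMono (he : |e| < 1) : StrictMono (meanAnom e) :=
  strictMono_of_hasDerivAt_pos (hasDerivAt_meanAnom e) (rho_pos he)

theorem abs_meanAnom_sub_le (e u : ℝ) : |meanAnom e u - u| ≤ |e| := by
  rw [meanAnom, sub_sub_cancel_left, abs_neg, abs_mul]
  exact mul_le_of_le_one_right (abs_nonneg e) (abs_sin_le_one u)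

theorem meanAnom_surjective (e : ℝ) : Surjective (meanAnom e) := by
  refine (contDiff_meanAnom (n := 0)).continuous.surjective ?_ ?_
  · refine tendsto_atTop_mono (fun u => ?_) (tendsto_atTop_add_const_right _ (-|e|) tendsto_id)
    show u + -|e| ≤ meanAnom e u
    linarith [(abs_le.mp (abs_meanAnom_sub_le e u)).1]
  · refine tendsto_atBot_mono (fun u => ?_) (tendsto_atBot_add_const_right _ |e| tendsto_id)
    show meanAnom e u ≤ u + |e|
    linarith [(abs_le.mp (abs_meanAnom_sub_le e u)).2]

noncomputable def keplerHomeomorph (he : |e| < 1) : ℝ ≃ₜ ℝ :=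
  (StrictMono.orderIsoOfSurjective _ (meanAnom_strictMono he) (meanAnom_surjective e)).toHomeomorph

@[simp]
theorem keplerHomeomorph_apply (he : |e| < 1) (u : ℝ) : keplerHomeomorph he u = meanAnom e u :=
  rfl

theorem meanAnom_keplerHomeomorph_symm (he : |e| < 1) (ℓ : ℝ) :
    meanAnom e ((keplerHomeomorph he).symm ℓ) = ℓ :=
  (keplerHomeomorph he).apply_symm_apply ℓ

theorem keplerHomeomorph_symm_meanAnom (he : |e| < 1) (u : ℝ) :
    (keplerHomeomorph he).symm (meanAnom e u) = u :=
  (keplerHomeomorph he).symm_apply_apply u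

theorem contDiff_keplerHomeomorph_symm (he : |e| < 1) {n : WithTop ℕ∞} :
    ContDiff ℝ n (keplerHomeomorph he).symm :=
  (keplerHomeomorph he).contDiff_symm_deriv (fun u => (rho_pos he u).ne') (hasDerivAt_meanAnom e)
    contDiff_meanAnom

theorem rho_periodic (e : ℝ) : Periodic (rho e) (2 * π) := fun u => by
  simp [rho, Real.cos_add_two_pi]

theorem trueExp_periodic (e : ℝ) : Periodic (trueExp e) (2 * π) := fun u => by
  simp [trueExp, Real.cos_add_two_pi, Real.sin_add_two_pi]

theorem meanAnom_add_two_pi (e u : ℝ) : meanAnom e (u + 2 * π) = meanAnom e u + 2 * π := by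
  rw [meanAnom, meanAnom, Real.sin_add_two_pi]; ring

theorem keplerHomeomorph_symm_add_two_pi (he : |e| < 1) (ℓ : ℝ) :
    (keplerHomeomorph he).symm (ℓ + 2 * π) = (keplerHomeomorph he).symm ℓ + 2 * π :=
  (keplerHomeomorph he).injective <| by
    simp only [keplerHomeomorph_apply, meanAnom_add_two_pi, meanAnom_keplerHomeomorph_symm]

theorem meanAnom_zero (e : ℝ) : meanAnom e 0 = 0 := by simp [meanAnom]

theorem meanAnom_two_pi (e : ℝ) : meanAnom e (2 * π) = 2 * π := by simp [meanAnom]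

theorem rho_two_pi_sub (e u : ℝ) : rho e (2 * π - u) = rho e u := by
  simp [rho, Real.cos_two_pi_sub]

theorem meanAnom_two_pi_sub (e u : ℝ) : meanAnom e (2 * π - u) = 2 * π - meanAnom e u := by
  rw [meanAnom, meanAnom, Real.sin_two_pi_sub]; ring

theorem trueExp_two_pi_sub (e u : ℝ) : trueExp e (2 * π - u) = conj (trueExp e u) := by
  simp only [trueExp, Real.cos_two_pi_sub, Real.sin_two_pi_sub, map_div₀, map_add, map_mul,
    conj_ofReal, conj_I]
  push_cast
  ring

theorem norm_trueExp (he : |e| < 1) (u : ℝ) : ‖trueExp e u‖ = 1 := by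
  have hsq : (Real.cos u - e) ^ 2 + (√(1 - e ^ 2) * Real.sin u) ^ 2 = rho e u ^ 2 := by
    rw [mul_pow, Real.sq_sqrt (by nlinarith [abs_nonneg e, sq_abs e]), rho]
    nlinarith [Real.sin_sq_add_cos_sq u]
  have hnum : ‖((Real.cos u - e : ℝ) : ℂ) + ((√(1 - e ^ 2) * Real.sin u : ℝ) : ℂ) * I‖ =
      rho e u := by
    rw [← sq_eq_sq₀ (norm_nonneg _) (rho_pos he u).le, Complex.sq_norm, normSq_add_mul_I, hsq]
  rw [trueExp, norm_div, hnum]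
  change _ / ‖((rho e u : ℝ) : ℂ)‖ = 1
  rw [norm_real, Real.norm_of_nonneg (rho_pos he u).le, div_self (rho_pos he u).ne']

theorem contDiff_trueExp (he : |e| < 1) {n : WithTop ℕ∞} : ContDiff ℝ n (trueExp e) := by
  have hden : ∀ u, ((1 - e * Real.cos u : ℝ) : ℂ) ≠ 0 := fun u =>
    ofReal_ne_zero.mpr (rho_pos he u).ne'
  unfold trueExp
  simp only [div_eq_mul_inv]
  exact ContDiff.mul (by fun_prop) ((contDiff_rho (e := e)).ofReal.inv hden)

end Kepler

section Giacaglia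

variable {e : ℝ}

theorem contDiff_rho_zpow_mul_trueExp_zpow (he : |e| < 1) {N : WithTop ℕ∞} (n m : ℤ) :
    ContDiff ℝ N fun u => ((rho e u ^ n : ℝ) : ℂ) * trueExp e u ^ m :=
  ((contDiff_rho.zpow (fun u => (rho_pos he u).ne') n).ofReal).mul
    ((contDiff_trueExp he).zpow (fun u => norm_ne_zero_iff.mp (by simp [norm_trueExp he])) m)

theorem fourierCoeffOn_comp_keplerHomeomorph_symm (he : |e| < 1) {F : ℝ → ℂ} (hF : Continuous F)
    (k : ℤ) :
    fourierCoeffOn two_pi_pos (fun ℓ => F ((keplerHomeomorph he).symm ℓ)) k =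
      (2 * π)⁻¹ * ∫ u in 0..2 * π, rho e u * (exp (-(I * k * meanAnom e u)) * F u) := by
  set g : ℝ → ℂ := fun ℓ => exp (-(I * k * ℓ)) * F ((keplerHomeomorph he).symm ℓ)
  have hcv := integral_deriv_smul_comp (a := 0) (b := 2 * π) (g := g)
    (fun u _ => hasDerivAt_meanAnom e u) (contDiff_rho (n := 0)).continuous.continuousOn
    (by fun_prop)
  rw [meanAnom_zero, meanAnom_two_pi] at hcv
  simp only [comp_apply, g, keplerHomeomorph_symm_meanAnom, real_smul] at hcv
  rw [fourierCoeffOn_eq_integral_exp, hcv]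
  simp only [ofReal_mul, ofReal_ofNat, two_pi_I_mul_mul_div_two_pi]

theorem fourierCoeffOn_eq_hansen (he : |e| < 1) (n m k : ℤ) :
    fourierCoeffOn two_pi_pos (fun ℓ => ((rho e ((keplerHomeomorph he).symm ℓ) ^ n : ℝ) : ℂ) *
      trueExp e ((keplerHomeomorph he).symm ℓ) ^ m) k = hansen n m k e := by
  set W : ℝ → ℂ := fun u =>
    ((rho e u ^ (n + 1) : ℝ) : ℂ) * (trueExp e u ^ m * exp (-(I * k * meanAnom e u)))
  have hW : ∀ u, (rho e u : ℂ) * (exp (-(I * k * meanAnom e u)) *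
      (((rho e u ^ n : ℝ) : ℂ) * trueExp e u ^ m)) = W u := fun u => by
    simp only [W, zpow_add_one₀ (rho_pos he u).ne', ofReal_mul]
    ring
  have hWcont : Continuous W := by
    have := (contDiff_meanAnom (e := e) (n := 0)).continuous
    have := (contDiff_rho_zpow_mul_trueExp_zpow he (N := 0) (n + 1) m).continuous
    simp only [W, ← mul_assoc]
    fun_prop
  have hWsymm : ∀ u, W (0 + 2 * π - u) = conj (W u) := fun u => by
    simp only [W, zero_add, rho_two_pi_sub, meanAnom_two_pi_sub, trueExp_two_pi_sub,
      exp_neg_I_mul_int_mul_two_pi_sub, map_mul, conj_ofReal, map_zpow₀]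
  rw [fourierCoeffOn_comp_keplerHomeomorph_symm he
    (contDiff_rho_zpow_mul_trueExp_zpow he (N := 0) n m).continuous, hansen]
  simp only [hW]
  rw [integral_eq_ofReal_integral_re_of_conj (hWcont.intervalIntegrable _ _) hWsymm]
  simp only [W, re_ofReal_mul]
  push_cast
  rw [one_div]

end Giacaglia

/-- Giacaglia's relation, (r/a)^n e^{imf} = ∑_{k∈ℤ} X^{n,m}_k(e) e^{ikℓ},
with absolute convergence of the Fourier series in the mean anomaly. -/
theorem hansen_giacaglia (e : ℝ) (he : e ∈ Set.Ico (0:ℝ) 1) (n m : ℤ) (u₀ : ℝ) :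
    Summable (fun k : ℤ => |hansen n m k e|) ∧
    ((rho e u₀ ^ n : ℝ) : ℂ) * trueExp e u₀ ^ m =
      ∑' k : ℤ, (hansen n m k e : ℂ) *
        Complex.exp (Complex.I * (k : ℂ) * ((meanAnom e u₀ : ℝ) : ℂ)) := by
  have he' : |e| < 1 := abs_lt.mpr ⟨by linarith [he.1], he.2⟩
  let f : ℝ → ℂ := fun ℓ => ((rho e ((keplerHomeomorph he').symm ℓ) ^ n : ℝ) : ℂ) *
    trueExp e ((keplerHomeomorph he').symm ℓ) ^ m
  have hper : Periodic f (2 * π) := fun ℓ => by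
    simp only [f, keplerHomeomorph_symm_add_two_pi, rho_periodic e _, trueExp_periodic e _]
  have hf : ContDiff ℝ 2 f :=
    (contDiff_rho_zpow_mul_trueExp_zpow he' n m).comp (contDiff_keplerHomeomorph_symm he')
  have hcoeff : fourierCoeffOn two_pi_pos f = fun k => (hansen n m k e : ℂ) :=
    funext (fourierCoeffOn_eq_hansen he' n m)
  have hsum := summable_norm_fourierCoeffOn_of_contDiff_two two_pi_pos hper hf
  refine ⟨by simpa only [hcoeff, norm_real, Real.norm_eq_abs] using hsum, ?_⟩
  have := hasSum_fourierCoeffOn_mul_exp two_pi_pos hper hf.continuous hsum.of_norm (meanAnom e u₀)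
  simp only [hcoeff, f, keplerHomeomorph_symm_meanAnom, ofReal_mul, ofReal_ofNat,
    two_pi_I_mul_mul_div_two_pi] at this
  exact this.tsum_eq.symm
end
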